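/- Asymptotically, ∏_{ν=1}^n |B_{2ν}| ∼ C₂ · 2^n · (2π)^{−n(n+1)} · ∏_{ν=1}^n (2ν)! as n → ∞, where C₂ = ∏_{ν=1}^∞ ζ(2ν); more precisely, the ratio (∏_{ν=1}^n |B_{2ν}|) / (2^n (2π)^{−n(n+1)} ∏_{ν=1}^n (2ν)!) tends to C₂. -/

import Mathlib

/-!
By Euler's formula, `|B_{2ν}| = 2 (2ν)! ζ(2ν) / (2π)^{2ν}`, so the ratio in the theorem is exactly
the partial product `∏_{ν ≤ n} ζ(2ν)`, the powers of `2π` adding up to `(2π)^{n(n+1)}`. These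
partial products converge because `0 ≤ ζ(2ν + 2) - 1 ≤ 4^{-ν} ζ(2)` is summable.
-/

open Filter Finset Real

noncomputable def zetaEven (k : ℕ) : ℝ := ∑' m : ℕ, 1 / ((m : ℝ) + 1) ^ (2 * k)

lemma hasSum_zetaEven {k : ℕ} (hk : k ≠ 0) :
    HasSum (fun m : ℕ => 1 / ((m : ℝ) + 1) ^ (2 * k))
      ((-1 : ℝ) ^ (k + 1) * 2 ^ (2 * k - 1) * π ^ (2 * k) * bernoulli (2 * k) /
        (2 * k).factorial) := by
  have := (hasSum_nat_add_iff' 1).mpr (hasSum_zeta_nat hk)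
  simpa [zero_pow (by omega : 2 * k ≠ 0)] using this

lemma one_le_zetaEven {k : ℕ} (hk : k ≠ 0) : 1 ≤ zetaEven k := by
  rw [zetaEven, (hasSum_zetaEven hk).tsum_eq]
  simpa using le_hasSum (hasSum_zetaEven hk) 0 fun m _ => by positivity

lemma abs_bernoulli_two_mul {k : ℕ} (hk : k ≠ 0) :
    |(bernoulli (2 * k) : ℝ)| = 2 * (2 * k).factorial * zetaEven k / (2 * π) ^ (2 * k) := by
  have hpow : (2 : ℝ) ^ (2 * k) = 2 * 2 ^ (2 * k - 1) := by
    rw [← pow_succ']; congr 1; omega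
  rw [mul_pow, hpow, ← abs_of_pos (zero_lt_one.trans_le (one_le_zetaEven hk)), zetaEven,
    (hasSum_zetaEven hk).tsum_eq]
  simp only [abs_div, abs_mul, abs_pow, abs_neg, abs_one, one_pow, one_mul, abs_two,
    abs_of_pos pi_pos, Nat.abs_cast]
  field_simp

lemma zetaEven_succ_sub_one_le (k : ℕ) : zetaEven (k + 1) - 1 ≤ (1 / 4) ^ k * zetaEven 1 := by
  have hs := (hasSum_zetaEven k.succ_ne_zero).summable
  have hterm (m : ℕ) : 1 / (((m + 1 : ℕ) : ℝ) + 1) ^ (2 * (k + 1)) ≤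
      (1 / 4) ^ k * (1 / ((m : ℝ) + 1) ^ (2 * 1)) := by
    have h4 : (4 : ℝ) ≤ (((m + 1 : ℕ) : ℝ) + 1) ^ 2 := by
      push_cast; nlinarith [m.cast_nonneg (α := ℝ)]
    have hm : ((m : ℝ) + 1) ^ 2 ≤ (((m + 1 : ℕ) : ℝ) + 1) ^ 2 := by
      push_cast; gcongr; linarith
    calc 1 / (((m + 1 : ℕ) : ℝ) + 1) ^ (2 * (k + 1))
        = 1 / (((((m + 1 : ℕ) : ℝ) + 1) ^ 2) ^ k * (((m + 1 : ℕ) : ℝ) + 1) ^ 2) := by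
          rw [← pow_mul, ← pow_add, mul_add, mul_one]
      _ ≤ 1 / (4 ^ k * ((m : ℝ) + 1) ^ 2) := by gcongr
      _ = _ := by rw [one_div_pow, mul_one]; field_simp
  rw [zetaEven, hs.tsum_eq_zero_add, zetaEven, ← tsum_mul_left]
  simpa using (hs.comp_injective (add_left_injective 1)).tsum_le_tsum hterm
    ((hasSum_zetaEven one_ne_zero).summable.mul_left _)

lemma multipliable_zetaEven_succ : Multipliable fun k : ℕ => zetaEven (k + 1) := by
  have hsum : Summable fun k : ℕ => zetaEven (k + 1) - 1 :=
    Summable.of_nonneg_of_le (fun k => sub_nonneg.mpr (one_le_zetaEven k.succ_ne_zero))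
      zetaEven_succ_sub_one_le
      ((summable_geometric_of_lt_one (by norm_num) (by norm_num)).mul_right _)
  simpa using Real.multipliable_one_add_of_summable hsum

lemma sum_Icc_two_mul (n : ℕ) : ∑ ν ∈ Icc 1 n, 2 * ν = n * (n + 1) := by
  induction n with
  | zero => rfl
  | succ n ih => rw [sum_Icc_succ_top (by omega), ih]; ring

lemma prod_abs_bernoulli_two_mul (n : ℕ) :
    ∏ ν ∈ Icc 1 n, |(bernoulli (2 * ν) : ℝ)| =
      2 ^ n * (∏ ν ∈ Icc 1 n, ((2 * ν).factorial : ℝ)) * (∏ ν ∈ Icc 1 n, zetaEven ν)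
        / (2 * π) ^ (n * (n + 1)) := by
  rw [prod_congr rfl fun ν hν => abs_bernoulli_two_mul (by simp at hν; omega),
    prod_div_distrib, prod_mul_distrib, prod_mul_distrib, prod_const, Nat.card_Icc,
    prod_pow_eq_pow_sum, sum_Icc_two_mul, add_tsub_cancel_right]

lemma prod_Icc_one_eq_prod_range {M : Type*} [CommMonoid M] (f : ℕ → M) (n : ℕ) :
    ∏ ν ∈ Icc 1 n, f ν = ∏ ν ∈ range n, f (ν + 1) := by
  rw [range_eq_Ico, prod_Ico_add', zero_add, Ico_add_one_right_eq_Icc]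

lemma tsum_succ_rpow_neg_two_mul (ν : ℕ) :
    ∑' m : ℕ, ((m : ℝ) + 1) ^ (-(2 * ((ν : ℝ) + 1))) = zetaEven (ν + 1) := by
  refine tsum_congr fun m => ?_
  rw [show 2 * ((ν : ℝ) + 1) = ((2 * (ν + 1) : ℕ) : ℝ) by push_cast; ring,
    rpow_neg (by positivity), rpow_natCast, one_div]

/-- ∏_{ν=1}^n |B_{2ν}| ∼ C₂ · 2^n (2π)^{−n(n+1)} ∏_{ν=1}^n (2ν)!, where
    C₂ = ∏_{ν=1}^∞ ζ(2ν). -/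
theorem prod_bernoulli_asymptotic :
    Tendsto (fun n : ℕ =>
      (∏ ν ∈ Finset.Icc 1 n, |((bernoulli (2 * ν) : ℝ))|) /
        ((2 : ℝ) ^ n * (2 * Real.pi) ^ (-((n : ℝ) * ((n : ℝ) + 1)))
          * ∏ ν ∈ Finset.Icc 1 n, ((2 * ν).factorial : ℝ)))
      atTop
      (nhds (∏' ν : ℕ, ∑' m : ℕ, ((m : ℝ) + 1) ^ (-(2 * ((ν : ℝ) + 1))))) := by
  simp_rw [tsum_succ_rpow_neg_two_mul]
  refine multipliable_zetaEven_succ.hasProd.tendsto_prod_nat.congr fun n => ?_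
  have hpow : (2 * π) ^ (-((n : ℝ) * ((n : ℝ) + 1))) = ((2 * π) ^ (n * (n + 1)))⁻¹ := by
    rw [show (n : ℝ) * ((n : ℝ) + 1) = ((n * (n + 1) : ℕ) : ℝ) by push_cast; ring,
      rpow_neg (by positivity), rpow_natCast]
  have hfact : (0 : ℝ) < ∏ ν ∈ Icc 1 n, ((2 * ν).factorial : ℝ) := by positivity
  rw [prod_abs_bernoulli_two_mul, hpow, ← prod_Icc_one_eq_prod_range (fun ν => zetaEven ν)]
  field_simp
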